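/- arXiv:2107.04972 — 4 statements merged into one kernel-verified Lean document; each statement's English description precedes it below -/
import Mathlib

section
/- For every complex number k with Re(k) > 1, the Riemann zeta function satisfies ζ(k) = (1/Γ(k+1)) · ∫₀¹ (-log u)^k / (1-u)² du, where the integral is over u ∈ (0,1), (-log u)^k denotes the complex power of the positive real number -log u, and Γ is the Gamma function (so Γ(k+1) plays the role of k!). -/
open Real Complex

open MeasureTheory Set in
/-- For every complex `k` with `Re k > 1`,
`ζ(k) = (1/Γ(k+1)) ∫₀¹ (-log u)^k / (1-u)² du`. -/
theorem zeta_integral_repr_pos (k : ℂ) (hk : 1 < k.re) :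
    riemannZeta k =
      (1 / Complex.Gamma (k + 1)) *
        ∫ u in (0:ℝ)..1, ((-Real.log u : ℝ) : ℂ) ^ k / (1 - (u : ℂ)) ^ 2 := by
  set F : ℝ → ℂ := fun t => (rexp (-t) : ℂ) / (1 - (rexp (-t) : ℂ)) ^ 2 with hFdef
  have hs1 : (0:ℝ) < (k+1).re := by
    simp only [Complex.add_re, Complex.one_re]; linarith
  -- Step 1: mellin F (k+1) as a Dirichlet series
  have key : HasSum (fun n : ℕ => Complex.Gamma (k+1) * ((n:ℂ)+1) / (((n:ℝ)+1 : ℝ) : ℂ) ^ (k+1))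
      (mellin F (k+1)) := by
    apply hasSum_mellin (a := fun n : ℕ => (n:ℂ)+1) (p := fun n : ℕ => (n:ℝ)+1)
      (fun n => Or.inr (by positivity)) hs1
    · intro t ht
      have ht' : (0:ℝ) < t := ht
      have hx : ‖(rexp (-t) : ℂ)‖ < 1 := by
        rw [Complex.norm_real, Real.norm_eq_abs, abs_of_pos (Real.exp_pos _)]
        exact Real.exp_lt_one_iff.mpr (by linarith)
      have hgeo := hasSum_coe_mul_geometric_of_norm_lt_one hx
      have hshift : HasSum (fun n : ℕ => ((n+1 : ℕ) : ℂ) * (rexp (-t) : ℂ) ^ (n+1))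
          ((rexp (-t) : ℂ) / (1 - (rexp (-t) : ℂ)) ^ 2) := by
        simpa using (hasSum_nat_add_iff'
          (f := fun n : ℕ => (n:ℂ) * (rexp (-t) : ℂ) ^ n) 1).mpr hgeo
      convert hshift using 2 with n
      push_cast
      rw [← Complex.exp_nat_mul]
      congr 1
      push_cast
      ring
    · have hsum : Summable (fun n : ℕ => 1 / ((n:ℝ)+1) ^ k.re) := by
        have := (Real.summable_one_div_nat_rpow (p := k.re)).mpr hk
        have h2 := (summable_nat_add_iff 1).mpr this
        simpa using h2
      apply hsum.congr
      intro n
      have hpos : (0:ℝ) < (n:ℝ)+1 := by positivity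
      rw [show ((k:ℂ)+1).re = k.re + 1 by simp]
      rw [Real.rpow_add hpos, Real.rpow_one]
      rw [show ‖(n:ℂ)+1‖ = (n:ℝ)+1 by
        rw [show ((n:ℂ)+1) = (((n:ℝ)+1 : ℝ) : ℂ) by push_cast; ring, Complex.norm_real,
          Real.norm_eq_abs, abs_of_pos hpos]]
      field_simp
  -- Step 2: simplify the summand
  have hGammapos : Complex.Gamma (k+1) ≠ 0 :=
    Complex.Gamma_ne_zero_of_re_pos hs1
  have key2 : HasSum (fun n : ℕ => 1 / ((n:ℂ)+1) ^ k)
      ((Complex.Gamma (k+1))⁻¹ * mellin F (k+1)) := by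
    have := key.mul_left (Complex.Gamma (k+1))⁻¹
    refine this.congr_fun fun n => ?_
    have hz : ((n:ℂ)+1) ≠ 0 := by
      intro h
      have : ((n:ℂ)+1).re = 0 := by rw [h]; simp
      simp at this
      linarith [this]
    rw [show (((n:ℝ)+1 : ℝ) : ℂ) = (n:ℂ)+1 by push_cast; ring,
      Complex.cpow_add _ _ hz, Complex.cpow_one,
      mul_comm (((n:ℂ)+1) ^ k) ((n:ℂ)+1), ← div_div,
      mul_div_assoc (Complex.Gamma (k+1)), div_self hz, mul_one,
      ← mul_div_assoc, inv_mul_cancel₀ hGammapos]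
  have hzeta : riemannZeta k = (Complex.Gamma (k+1))⁻¹ * mellin F (k+1) := by
    rw [zeta_eq_tsum_one_div_nat_add_one_cpow hk]
    exact key2.tsum_eq.symm ▸ rfl
  -- Step 3: the interval integral equals the Mellin transform
  have himg : (fun t : ℝ => rexp (-t)) '' (Set.Ioi 0) = Set.Ioo 0 1 := by
    ext x
    constructor
    · rintro ⟨t, ht, rfl⟩
      exact ⟨Real.exp_pos _, Real.exp_lt_one_iff.mpr (by simpa using (Set.mem_Ioi.mp ht))⟩
    · rintro ⟨hx0, hx1⟩
      exact ⟨-Real.log x, by simpa [Set.mem_Ioi] using Real.log_neg hx0 hx1,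
        by simp [Real.exp_log hx0]⟩
  have hderiv : ∀ t ∈ Set.Ioi (0:ℝ),
      HasDerivWithinAt (fun t => rexp (-t)) (-rexp (-t)) (Set.Ioi 0) t := by
    intro t _
    simpa using ((hasDerivAt_neg t).exp).hasDerivWithinAt
  have hinj : Set.InjOn (fun t : ℝ => rexp (-t)) (Set.Ioi 0) := by
    intro a _ b _ h
    exact neg_injective (Real.exp_injective h)
  have hsub := integral_image_eq_integral_abs_deriv_smul measurableSet_Ioi hderiv hinj
    (fun u : ℝ => ((-Real.log u : ℝ) : ℂ) ^ k / (1 - (u : ℂ)) ^ 2)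
  rw [himg] at hsub
  have hint : (∫ u in (0:ℝ)..1, ((-Real.log u : ℝ) : ℂ) ^ k / (1 - (u : ℂ)) ^ 2)
      = mellin F (k+1) := by
    rw [intervalIntegral.integral_of_le zero_le_one, integral_Ioc_eq_integral_Ioo, hsub]
    rw [mellin]
    refine setIntegral_congr_fun measurableSet_Ioi fun t ht => ?_
    have : |(-rexp (-t))| = rexp (-t) := by
      rw [abs_neg, abs_of_pos (Real.exp_pos _)]
    rw [this, Real.log_exp, neg_neg]
    rw [show (k + 1 - 1 : ℂ) = k by ring]
    simp only [hFdef, Complex.real_smul, smul_eq_mul]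
    push_cast
    ring
  rw [hzeta, hint, one_div]
end

section
/- For every complex number k with Re(k) < 0, the Riemann zeta function satisfies ζ(k) = -(2·(2π)^{k-1}/(k-1)) · sin(kπ/2) · ∫₀¹ (-log u)^{1-k} / (1-u)² du, where the integral is over u ∈ (0,1) and (-log u)^{1-k} denotes the complex power of the positive real number -log u. -/
open Real Complex

open MeasureTheory Set in
private lemma mellin_aux {s : ℂ} (hs : 1 < s.re) :
    (∫ u in (0:ℝ)..1, ((-Real.log u : ℝ) : ℂ) ^ s / (1 - (u : ℂ)) ^ 2) =
      Complex.Gamma (s + 1) * riemannZeta s := by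
  set g : ℝ → ℂ := fun u ↦ ((-Real.log u : ℝ) : ℂ) ^ s / (1 - (u : ℂ)) ^ 2 with hg
  set F : ℝ → ℂ := fun t ↦ ((rexp (-t) : ℝ) : ℂ) / (1 - ((rexp (-t) : ℝ) : ℂ)) ^ 2 with hF
  have himg : (fun t : ℝ ↦ rexp (-t)) '' Ioi 0 = Ioo (0:ℝ) 1 := by
    ext u
    constructor
    · rintro ⟨t, ht, rfl⟩
      exact ⟨Real.exp_pos _, Real.exp_lt_one_iff.mpr (neg_lt_zero.mpr ht)⟩
    · rintro ⟨h1, h2⟩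
      exact ⟨-Real.log u, neg_pos.mpr (Real.log_neg h1 h2),
        by simp [Real.exp_log h1]⟩
  have hderiv : ∀ x ∈ Ioi (0:ℝ),
      HasDerivWithinAt (fun t : ℝ ↦ rexp (-t)) (-rexp (-x)) (Ioi 0) x := by
    intro x _
    have : HasDerivAt (fun t : ℝ ↦ rexp (-t)) (rexp (-x) * (-1)) x :=
      (Real.hasDerivAt_exp (-x)).comp x ((hasDerivAt_id x).neg)
    simpa using this.hasDerivWithinAt
  have hinj : InjOn (fun t : ℝ ↦ rexp (-t)) (Ioi 0) :=
    (Real.exp_injective.comp neg_injective).injOn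
  have step1 : (∫ u in (0:ℝ)..1, g u) = ∫ t in Ioi (0:ℝ), (t:ℂ) ^ (s + 1 - 1) • F t := by
    rw [intervalIntegral.integral_of_le zero_le_one, integral_Ioc_eq_integral_Ioo, ← himg,
      integral_image_eq_integral_abs_deriv_smul measurableSet_Ioi hderiv hinj g]
    refine setIntegral_congr_fun measurableSet_Ioi fun x hx ↦ ?_
    have hx' : (0:ℝ) < x := hx
    simp only [hg, hF, Real.log_exp, neg_neg, abs_neg, abs_of_pos (Real.exp_pos (-x)),
      real_smul, smul_eq_mul]
    rw [show s + 1 - 1 = s by ring]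
    ring
  have hp : ∀ n : ℕ, ((n:ℂ) + 1 = 0) ∨ (0:ℝ) < (n:ℝ) + 1 := fun n ↦ Or.inr (by positivity)
  have hs1 : 0 < (s + 1).re := by simp only [Complex.add_re, Complex.one_re]; linarith
  have hFsum : ∀ t ∈ Ioi (0:ℝ),
      HasSum (fun n : ℕ ↦ ((n:ℂ) + 1) * rexp (-((n:ℝ) + 1) * t)) (F t) := by
    intro t ht
    have ht' : (0:ℝ) < t := ht
    set x : ℂ := ((rexp (-t) : ℝ) : ℂ) with hx
    have hnorm : ‖x‖ < 1 := by
      rw [hx, Complex.norm_real, Real.norm_eq_abs, abs_of_pos (Real.exp_pos _)]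
      exact Real.exp_lt_one_iff.mpr (neg_lt_zero.mpr ht')
    have h := hasSum_coe_mul_geometric_of_norm_lt_one hnorm
    have h' : HasSum (fun n : ℕ ↦ ((n:ℕ) + 1 : ℂ) * x ^ (n + 1)) (x / (1 - x) ^ 2) := by
      have := (hasSum_nat_add_iff (f := fun n : ℕ ↦ (n : ℂ) * x ^ n) 1
        (g := x / (1 - x) ^ 2)).mpr (by simpa using h)
      simpa using this
    refine h'.congr_fun fun n ↦ ?_
    have : rexp (-((n:ℝ) + 1) * t) = rexp (-t) ^ (n + 1) := by
      rw [← Real.exp_nat_mul]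
      congr 1
      push_cast
      ring
    rw [this]
    push_cast [hx]
    ring
  have h_sum : Summable fun n : ℕ ↦ ‖(n:ℂ) + 1‖ / ((n:ℝ) + 1) ^ (s + 1).re := by
    have base : Summable fun n : ℕ ↦ 1 / ((n:ℝ) + 1) ^ s.re := by
      have := (summable_nat_add_iff 1).mpr (Real.summable_one_div_nat_rpow.mpr hs)
      simpa using this
    refine base.congr fun n ↦ ?_
    have hn : (0:ℝ) < (n:ℝ) + 1 := by positivity
    have : ‖(n:ℂ) + 1‖ = (n:ℝ) + 1 := by
      rw [show (n:ℂ) + 1 = (((n:ℝ) + 1 : ℝ) : ℂ) by push_cast; ring, Complex.norm_real,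
        Real.norm_eq_abs, abs_of_pos hn]
    rw [this, Complex.add_re, Complex.one_re, Real.rpow_add hn, Real.rpow_one]
    rw [one_div, eq_div_iff (by positivity)]
    field_simp
  have key := hasSum_mellin hp hs1 hFsum h_sum
  have hmel : mellin F (s + 1) =
      ∑' n : ℕ, Complex.Gamma (s + 1) * ((n:ℂ) + 1) / (((n:ℝ) + 1 : ℝ) : ℂ) ^ (s + 1) :=
    key.tsum_eq.symm
  rw [step1, show (∫ t in Ioi (0:ℝ), (t:ℂ) ^ (s + 1 - 1) • F t) = mellin F (s + 1) from rfl,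
    hmel, zeta_eq_tsum_one_div_nat_add_one_cpow hs, ← tsum_mul_left]
  congr 1 with n
  have hz : ((n:ℂ) + 1) ≠ 0 := by
    rw [show (n:ℂ) + 1 = (((n:ℝ) + 1 : ℝ) : ℂ) by push_cast; ring]
    exact Complex.ofReal_ne_zero.mpr (by positivity)
  have hcast : (((n:ℝ) + 1 : ℝ) : ℂ) = (n:ℂ) + 1 := by push_cast; ring
  rw [hcast, Complex.cpow_add _ _ hz, Complex.cpow_one, mul_div_assoc, mul_one_div,
    mul_comm (((n:ℂ) + 1) ^ s) ((n:ℂ) + 1), ← div_div, div_self hz]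
  rw [mul_one_div]

/-- For every complex `k` with `Re k < 0`,
`ζ(k) = -(2(2π)^(k-1)/(k-1)) sin(kπ/2) ∫₀¹ (-log u)^(1-k)/(1-u)² du`. -/
theorem zeta_integral_repr_neg (k : ℂ) (hk : k.re < 0) :
    riemannZeta k =
      -(2 * ((2 * Real.pi : ℝ) : ℂ) ^ (k - 1) / (k - 1)) *
        Complex.sin (k * Real.pi / 2) *
        ∫ u in (0:ℝ)..1, ((-Real.log u : ℝ) : ℂ) ^ (1 - k) / (1 - (u : ℂ)) ^ 2 := by
  have h1 : 1 < (1 - k).re := by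
    simp only [Complex.sub_re, Complex.one_re]; linarith
  have hint := mellin_aux h1
  rw [show (1 - k) + 1 = 2 - k by ring] at hint
  rw [hint]
  have h2 : ∀ n : ℕ, (1 - k) ≠ -(n:ℂ) := by
    intro n h
    apply_fun Complex.re at h
    simp only [Complex.sub_re, Complex.one_re, Complex.neg_re, Complex.natCast_re] at h
    have : (0:ℝ) ≤ n := n.cast_nonneg
    linarith
  have h3 : (1 - k) ≠ 1 := by
    intro h
    apply_fun Complex.re at h
    simp only [Complex.sub_re, Complex.one_re] at h
    linarith
  have hfe := riemannZeta_one_sub h2 h3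
  rw [show (1:ℂ) - (1 - k) = k by ring] at hfe
  rw [hfe]
  have hk1 : (1:ℂ) - k ≠ 0 := by
    intro h
    apply_fun Complex.re at h
    simp only [Complex.sub_re, Complex.one_re, Complex.zero_re] at h
    linarith
  have hG : Complex.Gamma (2 - k) = (1 - k) * Complex.Gamma (1 - k) := by
    rw [show (2:ℂ) - k = (1 - k) + 1 by ring, Complex.Gamma_add_one _ hk1]
  have hcos : Complex.cos (↑Real.pi * (1 - k) / 2) = Complex.sin (k * ↑Real.pi / 2) := by
    rw [show (↑Real.pi : ℂ) * (1 - k) / 2 = ↑Real.pi / 2 - k * ↑Real.pi / 2 by ring,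
      Complex.cos_pi_div_two_sub]
  have hpow : ((2:ℂ) * ↑Real.pi) ^ (-(1 - k)) = (((2 * Real.pi : ℝ) : ℝ) : ℂ) ^ (k - 1) := by
    rw [neg_sub]
    push_cast
    ring_nf
  rw [hG, hcos, hpow]
  have hk1' : k - 1 ≠ 0 := by
    intro h
    apply hk1
    rw [← neg_eq_zero, neg_sub]
    exact h
  field_simp
  ring
end

section
/- For all positive integers k and n, ∑_{j=1}^{k} (2πi·n)^{-2j} · ζ(2j) / (2k-2j)! = ((2πn)^{-2k} / (2·(2k)!)) · ∫₀¹ ( -2(2πn)^{2k} + (2πn - i·log u)^{2k} + (2πn + i·log u)^{2k} ) / (1-u)² du, where the integral is over u ∈ (0,1) and i is the imaginary unit. -/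
/-!
Expanding the two binomials, the odd powers of `log u` cancel and the constant terms cancel
against `-2 (2πn)^{2k}`, so the integrand is a combination of `(-log u)^{2j} / (1 - u)^2` with
`1 ≤ j ≤ k`. Writing `1 / (1 - u)^2 = ∑ (m + 1) u^m` and substituting `u = e^{-x}` in each term,
`∫₀¹ (-log u)^r / (1 - u)^2 du = ∑ (m + 1) r! / (m + 1)^{r + 1} = r! ζ(r)` for `r ≥ 2`; the
interchange is monotone convergence, all terms being nonnegative. The remaining identity of
coefficients is `(2k)! = C(2k, 2j) (2j)! (2k - 2j)!` together with `i^{-2j} = (-1)^j`.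
-/

open Real Complex Finset MeasureTheory
open scoped Nat

theorem integrable_and_integral_eq_of_hasSum_of_nonneg {α ι : Type*} [MeasurableSpace α]
    {μ : Measure α} [Countable ι] {f : ι → α → ℝ} {g : α → ℝ} {S : ℝ}
    (hf : ∀ n, Integrable (f n) μ) (hf_nonneg : ∀ n, 0 ≤ᵐ[μ] f n)
    (hg : AEStronglyMeasurable g μ) (hfg : ∀ᵐ a ∂μ, HasSum (f · a) (g a))
    (hS : HasSum (fun n ↦ ∫ a, f n a ∂μ) S) :
    Integrable g μ ∧ ∫ a, g a ∂μ = S := by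
  have hf_nonneg' : ∀ᵐ a ∂μ, ∀ n, 0 ≤ f n a := ae_all_iff.2 hf_nonneg
  have hg_nonneg : 0 ≤ᵐ[μ] g := by
    filter_upwards [hfg, hf_nonneg'] with a ha h0 using ha.nonneg h0
  have hlint : ∫⁻ a, ENNReal.ofReal (g a) ∂μ = ENNReal.ofReal S := calc
    ∫⁻ a, ENNReal.ofReal (g a) ∂μ = ∫⁻ a, ∑' n, ENNReal.ofReal (f n a) ∂μ := by
      refine lintegral_congr_ae ?_
      filter_upwards [hfg, hf_nonneg'] with a ha h0
      rw [← ha.tsum_eq, ENNReal.ofReal_tsum_of_nonneg h0 ha.summable]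
    _ = ∑' n, ENNReal.ofReal (∫ a, f n a ∂μ) := by
      rw [lintegral_tsum fun n ↦ (hf n).aemeasurable.ennreal_ofReal]
      simp_rw [ofReal_integral_eq_lintegral_ofReal (hf _) (hf_nonneg _)]
    _ = ENNReal.ofReal S := by
      rw [← ENNReal.ofReal_tsum_of_nonneg (fun n ↦ integral_nonneg_of_ae (hf_nonneg n))
        hS.summable, hS.tsum_eq]
  refine ⟨⟨hg, (hasFiniteIntegral_iff_ofReal hg_nonneg).2 (hlint ▸ ENNReal.ofReal_lt_top)⟩, ?_⟩
  rw [integral_eq_lintegral_of_nonneg_ae hg_nonneg hg, hlint,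
    ENNReal.toReal_ofReal (hS.nonneg fun n ↦ integral_nonneg_of_ae (hf_nonneg n))]

theorem image_exp_neg_Ioi_zero : (fun x ↦ rexp (-x)) '' Set.Ioi 0 = Set.Ioo 0 1 := by
  ext u
  constructor
  · rintro ⟨x, hx, rfl⟩
    exact ⟨Real.exp_pos _, Real.exp_lt_one_iff.2 (neg_lt_zero.2 hx)⟩
  · rintro ⟨h0, h1⟩
    exact ⟨-Real.log u, neg_pos.2 (Real.log_neg h0 h1), by simp [Real.exp_log h0]⟩

theorem integral_comp_exp_neg_Ioi {E : Type*} [NormedAddCommGroup E] [NormedSpace ℝ E]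
    (g : ℝ → E) :
    ∫ x in Set.Ioi 0, rexp (-x) • g (rexp (-x)) = ∫ u in Set.Ioo 0 1, g u := by
  symm
  rw [← image_exp_neg_Ioi_zero]
  simpa [abs_of_pos (Real.exp_pos _)] using integral_image_eq_integral_abs_deriv_smul
    measurableSet_Ioi
    (fun x _ ↦ (Real.hasDerivAt_exp (-x)).comp x (hasDerivAt_neg x) |>.hasDerivWithinAt)
    (fun x _ y _ hxy ↦ neg_injective (Real.exp_injective hxy)) g

theorem integral_pow_mul_neg_log_pow (m r : ℕ) :
    ∫ u in Set.Ioo 0 1, u ^ m * (-Real.log u) ^ r = r ! / ((m : ℝ) + 1) ^ (r + 1) := by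
  have hsubst (x : ℝ) : rexp (-x) • (rexp (-x) ^ m * (-Real.log (rexp (-x))) ^ r) =
      x ^ ((r + 1 : ℝ) - 1) * rexp (-((m + 1) * x)) := by
    rw [Real.log_exp, neg_neg, add_sub_cancel_right, Real.rpow_natCast, smul_eq_mul,
      ← Real.exp_nat_mul, ← mul_assoc, ← Real.exp_add]
    ring_nf
  rw [← integral_comp_exp_neg_Ioi]
  simp_rw [hsubst]
  rw [Real.integral_rpow_mul_exp_neg_mul_Ioi (by positivity) (by positivity),
    Real.Gamma_nat_eq_factorial]
  rw_mod_cast [one_div_pow, one_div_mul_eq_div]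

theorem integrableOn_pow_mul_neg_log_pow (m r : ℕ) :
    IntegrableOn (fun u : ℝ ↦ u ^ m * (-Real.log u) ^ r) (Set.Ioo 0 1) :=
  -- a non-integrable function has Bochner integral `0`
  Integrable.of_integral_ne_zero <| by rw [integral_pow_mul_neg_log_pow]; positivity

theorem hasSum_succ_mul_pow_mul_neg_log_pow (r : ℕ) {u : ℝ} (hu : u ∈ Set.Ioo 0 1) :
    HasSum (fun m : ℕ ↦ (m + 1) * (u ^ m * (-Real.log u) ^ r))
      ((-Real.log u) ^ r / (1 - u) ^ 2) := by
  have hu' : ‖u‖ < 1 := by rw [Real.norm_of_nonneg hu.1.le]; exact hu.2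
  have h := (hasSum_choose_mul_geometric_of_norm_lt_one 1 hu').mul_right ((-Real.log u) ^ r)
  rw [one_add_one_eq_two, one_div_mul_eq_div] at h
  refine h.congr_fun fun m ↦ ?_
  rw [Nat.choose_one_right]
  push_cast
  ring

theorem integrableOn_neg_log_pow_div_one_sub_sq_and_integral_eq {r : ℕ} (hr : 1 < r) :
    IntegrableOn (fun u ↦ (-Real.log u) ^ r / (1 - u) ^ 2) (Set.Ioo 0 1) ∧
      ∫ u in Set.Ioo 0 1, (-Real.log u) ^ r / (1 - u) ^ 2 =
        r ! * ∑' n : ℕ, 1 / ((n : ℝ) + 1) ^ r := by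
  refine integrable_and_integral_eq_of_hasSum_of_nonneg
    (fun m ↦ (integrableOn_pow_mul_neg_log_pow m r).const_mul _)
    (fun m ↦ ae_restrict_of_forall_mem measurableSet_Ioo fun u hu ↦ ?_)
    (Measurable.aestronglyMeasurable (by fun_prop))
    (ae_restrict_of_forall_mem measurableSet_Ioo fun u hu ↦
      hasSum_succ_mul_pow_mul_neg_log_pow r hu) ?_
  · have := neg_nonneg.2 (Real.log_nonpos hu.1.le hu.2.le)
    have := hu.1.le
    positivity
  · have hsum : Summable fun n : ℕ ↦ 1 / ((n : ℝ) + 1) ^ r := by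
      exact_mod_cast (summable_nat_add_iff 1).2 (Real.summable_one_div_nat_pow.2 hr)
    refine (hsum.hasSum.mul_left (r ! : ℝ)).congr_fun fun m ↦ ?_
    rw [integral_const_mul, integral_pow_mul_neg_log_pow]
    field_simp
    ring

theorem integral_neg_log_pow_div_one_sub_sq {r : ℕ} (hr : 1 < r) :
    ∫ u in Set.Ioo 0 1, (((-Real.log u) ^ r / (1 - u) ^ 2 : ℝ) : ℂ) = r ! * riemannZeta r := by
  rw [integral_complex_ofReal, (integrableOn_neg_log_pow_div_one_sub_sq_and_integral_eq hr).2,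
    zeta_eq_tsum_one_div_nat_add_one_cpow (by simpa using hr)]
  push_cast
  simp_rw [cpow_natCast]

theorem sum_range_two_mul_add_one_eq_of_odd {M : Type*} [AddCommMonoid M] {f : ℕ → M}
    (hf : ∀ i, Odd i → f i = 0) (k : ℕ) :
    ∑ i ∈ range (2 * k + 1), f i = ∑ j ∈ range (k + 1), f (2 * j) := by
  induction k with
  | zero => simp
  | succ k ih =>
    rw [show 2 * (k + 1) + 1 = 2 * k + 1 + 1 + 1 by ring, sum_range_succ, sum_range_succ, ih,
      hf _ (odd_two_mul_add_one k), add_zero, sum_range_succ _ (k + 1), mul_add_one]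

theorem add_pow_two_mul_add_neg_add_pow_two_mul {R : Type*} [CommRing R] (x y : R) (k : ℕ) :
    (x + y) ^ (2 * k) + (-x + y) ^ (2 * k) =
      2 * ∑ j ∈ range (k + 1), x ^ (2 * j) * y ^ (2 * k - 2 * j) * (2 * k).choose (2 * j) := by
  rw [add_pow, add_pow, ← sum_add_distrib, sum_range_two_mul_add_one_eq_of_odd, mul_sum]
  · refine sum_congr rfl fun j _ ↦ ?_
    rw [(even_two_mul j).neg_pow]
    ring
  · intro i hi
    rw [hi.neg_pow]
    ring

theorem mul_I_zpow_neg_two_mul (a : ℂ) (j : ℕ) :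
    (a * I) ^ (-(2 * j : ℤ)) = (-1) ^ j * a ^ (-(2 * j : ℤ)) := by
  rw [mul_zpow, mul_comm, zpow_neg I, show (2 * j : ℤ) = ((2 * j : ℕ) : ℤ) by push_cast; ring,
    zpow_natCast, pow_mul, I_sq, ← inv_pow, inv_neg_one]

theorem neg_two_mul_pow_add_sub_I_mul_pow_add_add_I_mul_pow (a x : ℂ) (k : ℕ) :
    -2 * a ^ (2 * k) + (a - I * x) ^ (2 * k) + (a + I * x) ^ (2 * k) =
      ∑ j ∈ Icc 1 k,
        2 * (a ^ (2 * k - 2 * j) * (-1) ^ j * (2 * k).choose (2 * j)) * x ^ (2 * j) := by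
  calc _ = (I * x + a) ^ (2 * k) + (-(I * x) + a) ^ (2 * k) - 2 * a ^ (2 * k) := by ring
    _ = 2 * ∑ j ∈ Ico 1 (k + 1),
          (I * x) ^ (2 * j) * a ^ (2 * k - 2 * j) * (2 * k).choose (2 * j) := by
      rw [add_pow_two_mul_add_neg_add_pow_two_mul, sum_range_eq_add_Ico _ k.succ_pos]
      simp only [mul_zero, pow_zero, Nat.sub_zero, Nat.choose_zero_right, Nat.cast_one]
      ring
    _ = _ := by
      rw [Finset.Ico_add_one_right_eq_Icc, mul_sum]
      refine sum_congr rfl fun j _ ↦ ?_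
      rw [mul_pow, pow_mul, I_sq]
      ring

theorem mul_I_zpow_neg_two_mul_mul_div_factorial {k j : ℕ} (hjk : j ≤ k) {a : ℂ} (ha : a ≠ 0)
    (z : ℂ) :
    (a * I) ^ (-(2 * j : ℤ)) * z / ((2 * k - 2 * j)! : ℂ) =
      a ^ (-(2 * k : ℤ)) / (2 * ((2 * k)! : ℂ)) *
        (2 * (a ^ (2 * k - 2 * j) * (-1) ^ j * (2 * k).choose (2 * j)) * ((2 * j)! * z)) := by
  have hpow : a ^ (-(2 * k : ℤ)) * a ^ (2 * k - 2 * j) = a ^ (-(2 * j : ℤ)) := by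
    rw [← zpow_natCast, ← zpow_add₀ ha]
    push_cast [Nat.cast_sub (by omega : 2 * j ≤ 2 * k)]
    ring_nf
  have hfact := Nat.choose_mul_factorial_mul_factorial (by omega : 2 * j ≤ 2 * k)
  have hchoose : ((2 * k).choose (2 * j) : ℂ) ≠ 0 := by
    exact_mod_cast (Nat.choose_pos (by omega)).ne'
  rw [mul_I_zpow_neg_two_mul, ← hpow, ← hfact]
  push_cast
  field_simp [Nat.factorial_ne_zero]

theorem sum_zeta_even_integral_general (k n : ℕ) (hn : 0 < n) :
    ∑ j ∈ Finset.Icc 1 k,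
        (2 * (Real.pi : ℂ) * Complex.I * n) ^ (-(2 * j : ℤ)) * riemannZeta (2 * j) /
          (Nat.factorial (2 * k - 2 * j) : ℂ) =
      (2 * (Real.pi : ℂ) * n) ^ (-(2 * k : ℤ)) / (2 * (Nat.factorial (2 * k) : ℂ)) *
        ∫ u in (0:ℝ)..1,
          (-2 * (2 * (Real.pi : ℂ) * n) ^ (2 * k) +
              (2 * (Real.pi : ℂ) * n - Complex.I * Real.log u) ^ (2 * k) +
              (2 * (Real.pi : ℂ) * n + Complex.I * Real.log u) ^ (2 * k)) /
            (1 - (u : ℂ)) ^ 2 := by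
  set a : ℂ := 2 * π * n with ha
  have ha0 : a ≠ 0 := by simp [ha, hn.ne']
  have h2j {j : ℕ} (hj : j ∈ Icc 1 k) : 1 < 2 * j := by rw [mem_Icc] at hj; omega
  have hintegrand (u : ℝ) :
      (-2 * a ^ (2 * k) + (a - I * Real.log u) ^ (2 * k) + (a + I * Real.log u) ^ (2 * k)) /
          (1 - (u : ℂ)) ^ 2 =
        ∑ j ∈ Icc 1 k, 2 * (a ^ (2 * k - 2 * j) * (-1) ^ j * (2 * k).choose (2 * j)) *
          (((-Real.log u) ^ (2 * j) / (1 - u) ^ 2 : ℝ) : ℂ) := by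
    rw [neg_two_mul_pow_add_sub_I_mul_pow_add_add_I_mul_pow, sum_div]
    refine sum_congr rfl fun j _ ↦ ?_
    push_cast
    rw [(even_two_mul j).neg_pow, mul_div_assoc]
  rw [intervalIntegral.integral_of_le zero_le_one, integral_Ioc_eq_integral_Ioo,
    integral_congr_ae (ae_of_all _ hintegrand), integral_finsetSum _ fun j hj ↦
      ((integrableOn_neg_log_pow_div_one_sub_sq_and_integral_eq (h2j hj)).1.ofReal.const_mul _),
    mul_sum]
  refine sum_congr rfl fun j hj ↦ ?_
  rw [integral_const_mul, integral_neg_log_pow_div_one_sub_sq (h2j hj),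
    show 2 * π * I * n = a * I by ring]
  push_cast
  exact mul_I_zpow_neg_two_mul_mul_div_factorial (mem_Icc.1 hj).2 ha0 _

/-- For all positive integers `k` and `n`,
`∑_{j=1}^{k} (2πi n)^{-2j} ζ(2j)/(2k-2j)!
  = ((2πn)^{-2k}/(2(2k)!)) ∫₀¹ (-2(2πn)^{2k} + (2πn - i log u)^{2k} + (2πn + i log u)^{2k})/(1-u)² du`. -/
theorem sum_zeta_even_integral (k n : ℕ) (hk : 0 < k) (hn : 0 < n) :
    ∑ j ∈ Finset.Icc 1 k,
        (2 * (Real.pi : ℂ) * Complex.I * n) ^ (-(2 * j : ℤ)) * riemannZeta (2 * j) /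
          (Nat.factorial (2 * k - 2 * j) : ℂ) =
      (2 * (Real.pi : ℂ) * n) ^ (-(2 * k : ℤ)) / (2 * (Nat.factorial (2 * k) : ℂ)) *
        ∫ u in (0:ℝ)..1,
          (-2 * (2 * (Real.pi : ℂ) * n) ^ (2 * k) +
              (2 * (Real.pi : ℂ) * n - Complex.I * Real.log u) ^ (2 * k) +
              (2 * (Real.pi : ℂ) * n + Complex.I * Real.log u) ^ (2 * k)) /
            (1 - (u : ℂ)) ^ 2 :=
  sum_zeta_even_integral_general k n hn
end

section
/- For every positive integer k, every positive integer n, and every complex number b with Re(b) > 0, (2k-1)! · b^{2k-1} · ∑_{j=0}^{2k-1} ( b^{-j} · (2π)^{-j-1} / ( (j+1)! · (2k-1-j)! ) ) · ∫₀¹ ( -2(2πn)^{j+1} + (2πn - i·log u)^{j+1} + (2πn + i·log u)^{j+1} ) / (1-u)² du = ( (2π)^{-2k} / (2k) ) · ∫₀¹ ( -2(2π(n+b))^{2k} + (2π(n+b) - i·log u)^{2k} + (2π(n+b) + i·log u)^{2k} ) / (1-u)² du, where the integrals are over u ∈ (0,1). -/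
/-!
Put `x = 2πn`, `y = 2πb` and `w = i log u`. Expanding `(x + y ± w)^K` binomially in `y` turns the
symmetric second difference `-2c^K + (c - w)^K + (c + w)^K` at `c = x + y` into
`∑ j < K, C(K, j+1) y^(K-1-j)` times the second differences of `t ↦ t^(j+1)` at `x`. Each of these is a
polynomial in `log u` with only powers `≥ 2`, which cancel the double pole of `(1 - u)⁻²` at `u = 1`,
so the integral can be taken termwise; with `K = 2k` the coefficients match because
`C(2k, j+1) (j+1)! (2k-1-j)! = (2k)! = 2k (2k-1)!`.
-/

open Real Finset MeasureTheory

theorem Real.abs_log_le_one_sub_mul_rpow_neg_div {u a : ℝ} (hu₀ : 0 < u) (hu₁ : u ≤ 1)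
    (ha₀ : 0 < a) (ha₁ : a ≤ 1) : |log u| ≤ (1 - u) * u ^ (-a) / a := by
  have hlog : a * -log u ≤ u ^ (-a) - 1 := by
    have := log_le_sub_one_of_pos (rpow_pos_of_pos hu₀ (-a))
    rwa [log_rpow hu₀, neg_mul, ← mul_neg] at this
  have hpow : u * u ^ (-a) ≤ 1 := by
    have := rpow_add hu₀ 1 (-a)
    rw [rpow_one] at this
    exact this ▸ rpow_le_one hu₀.le hu₁ (by linarith)
  rw [abs_of_nonpos (log_nonpos hu₀.le hu₁), le_div_iff₀ ha₀]
  nlinarith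

theorem intervalIntegrable_log_pow_div_one_sub_sq (p : ℕ) :
    IntervalIntegrable (fun u : ℝ => log u ^ (p + 2) / (1 - u) ^ 2) volume 0 1 := by
  -- `|log u| ≤ (1 - u) u^(-a) / a` cancels the pole at `1` and costs only `u^(-1/2)` at `0`
  set a : ℝ := 1 / (2 * (p + 2)) with ha
  have ha₀ : 0 < a := by positivity
  have ha₁ : a ≤ 1 := by
    rw [ha, div_le_one (by positivity)]; linarith [(p.cast_nonneg : (0:ℝ) ≤ p)]
  have hg : IntegrableOn (fun u : ℝ => u ^ (-(1 / 2) : ℝ) / a ^ (p + 2)) (Set.Ioc 0 1) := by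
    have := (intervalIntegral.intervalIntegrable_rpow' (a := 0) (b := 1)
      (r := -(1 / 2)) (by norm_num)).div_const (a ^ (p + 2))
    rwa [intervalIntegrable_iff_integrableOn_Ioc_of_le zero_le_one] at this
  rw [intervalIntegrable_iff_integrableOn_Ioc_of_le zero_le_one]
  refine hg.mono' (Measurable.aestronglyMeasurable (by fun_prop)) ?_
  filter_upwards [ae_restrict_mem measurableSet_Ioc] with u ⟨hu₀, hu₁⟩
  have hexp : (u ^ (-a)) ^ (p + 2) = u ^ (-(1 / 2) : ℝ) := by
    rw [← rpow_mul_natCast hu₀.le, ha]; congr 1; field_simp; push_cast; ring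
  rw [norm_div, norm_pow, norm_pow, norm_eq_abs, norm_eq_abs, abs_of_nonneg (by linarith : 0 ≤ 1 - u)]
  refine div_le_of_le_mul₀ (by positivity) (by positivity) ?_
  calc |log u| ^ (p + 2) ≤ ((1 - u) * u ^ (-a) / a) ^ (p + 2) := by
        gcongr; exact abs_log_le_one_sub_mul_rpow_neg_div hu₀ hu₁ ha₀ ha₁
    _ = (1 - u) ^ p * (u ^ (-(1 / 2) : ℝ) / a ^ (p + 2)) * (1 - u) ^ 2 := by
      rw [div_pow, mul_pow, hexp]; ring
    _ ≤ 1 * (u ^ (-(1 / 2) : ℝ) / a ^ (p + 2)) * (1 - u) ^ 2 := by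
      gcongr; exact pow_le_one₀ (by linarith) (by linarith)
    _ = _ := by rw [one_mul]

def secondDiff (m : ℕ) (c w : ℂ) : ℂ := -2 * c ^ m + (c - w) ^ m + (c + w) ^ m

theorem secondDiff_zero (c w : ℂ) : secondDiff 0 c w = 0 := by
  norm_num [secondDiff]

theorem secondDiff_add (K : ℕ) (x y w : ℂ) :
    secondDiff K (x + y) w =
      ∑ j ∈ range K, (K.choose (j + 1) : ℂ) * y ^ (K - 1 - j) * secondDiff (j + 1) x w := by
  have hbinom : secondDiff K (x + y) w =
      ∑ i ∈ range (K + 1), (K.choose i : ℂ) * y ^ (K - i) * secondDiff i x w := by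
    rw [secondDiff, show x + y - w = x - w + y by ring, show x + y + w = x + w + y by ring,
      add_pow, add_pow, add_pow, mul_sum, ← sum_add_distrib, ← sum_add_distrib]
    exact sum_congr rfl fun i _ => by rw [secondDiff]; ring
  rw [hbinom, sum_range_succ', secondDiff_zero, mul_zero, add_zero]
  exact sum_congr rfl fun j _ => by rw [Nat.sub_sub, add_comm 1 j]

theorem intervalIntegrable_secondDiff_div (m : ℕ) (c : ℂ) :
    IntervalIntegrable (fun u : ℝ => secondDiff m c (Complex.I * log u) / (1 - (u : ℂ)) ^ 2)
      volume 0 1 := by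
  have hexpand : (fun u : ℝ => secondDiff m c (Complex.I * log u) / (1 - (u : ℂ)) ^ 2) =
      ∑ j ∈ range m, fun u : ℝ => (m.choose (j + 1) : ℂ) * c ^ (m - 1 - j) *
        (secondDiff (j + 1) 0 (Complex.I * log u) / (1 - (u : ℂ)) ^ 2) := by
    ext u
    rw [← zero_add c, secondDiff_add, sum_div, Finset.sum_apply]
    simp only [zero_add, mul_div_assoc]
  rw [hexpand]
  refine IntervalIntegrable.sum _ fun j _ => IntervalIntegrable.const_mul ?_ _
  rcases j with _ | p
  · simp [secondDiff]
  · have hlog : (fun u : ℝ => secondDiff (p + 2) 0 (Complex.I * log u) / (1 - (u : ℂ)) ^ 2) =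
        fun u : ℝ => (Complex.I ^ (p + 2) + (-Complex.I) ^ (p + 2)) *
          ((log u ^ (p + 2) / (1 - u) ^ 2 : ℝ) : ℂ) := by
      ext u
      push_cast
      simp only [secondDiff]
      ring
    rw [hlog]
    obtain ⟨h₁, h₂⟩ := intervalIntegrable_log_pow_div_one_sub_sq p
    exact IntervalIntegrable.const_mul ⟨h₁.ofReal, h₂.ofReal⟩ _

theorem integral_secondDiff_add (K : ℕ) (x y : ℂ) :
    ∫ u in (0 : ℝ)..1, secondDiff K (x + y) (Complex.I * log u) / (1 - (u : ℂ)) ^ 2 =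
      ∑ j ∈ range K, (K.choose (j + 1) : ℂ) * y ^ (K - 1 - j) *
        ∫ u in (0 : ℝ)..1, secondDiff (j + 1) x (Complex.I * log u) / (1 - (u : ℂ)) ^ 2 := by
  simp_rw [secondDiff_add, sum_div, mul_div_assoc]
  rw [intervalIntegral.integral_finsetSum fun j _ =>
    (intervalIntegrable_secondDiff_div _ x).const_mul _]
  simp_rw [intervalIntegral.integral_const_mul]

theorem factorial_mul_pow_mul_zpow_div {F : Type*} [Field F] [CharZero F] {K j : ℕ} (hj : j < K)
    {b P : F} (hb : b ≠ 0) (hP : P ≠ 0) :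
    ((K - 1).factorial : F) * b ^ (K - 1) *
        (b ^ (-(j : ℤ)) * P ^ (-(j : ℤ) - 1) / ((j + 1).factorial * (K - 1 - j).factorial)) =
      P ^ (-(K : ℤ)) / K * (K.choose (j + 1) * (P * b) ^ (K - 1 - j)) := by
  obtain ⟨m, rfl⟩ : ∃ m, K = j + m + 1 := ⟨K - (j + 1), by omega⟩
  have hchoose : (j + m + 1).choose (j + 1) * (j + 1).factorial * m.factorial =
      (j + m).factorial * (j + m + 1) := by
    simpa [Nat.factorial_succ, mul_comm] using
      Nat.choose_mul_factorial_mul_factorial (show j + 1 ≤ j + m + 1 by omega)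
  have hfact : ((j + m).factorial : F) =
      (j + m + 1).choose (j + 1) * (j + 1).factorial * m.factorial / (j + m + 1 : ℕ) := by
    rw [eq_div_iff (Nat.cast_ne_zero.2 (Nat.succ_ne_zero _))]
    exact_mod_cast hchoose.symm
  have h₁ : ((j + 1).factorial : F) ≠ 0 := Nat.cast_ne_zero.2 (Nat.factorial_ne_zero _)
  have h₂ : (m.factorial : F) ≠ 0 := Nat.cast_ne_zero.2 (Nat.factorial_ne_zero _)
  simp only [Nat.add_sub_cancel, Nat.add_sub_cancel_left, hfact,
    show -(j : ℤ) - 1 = -((j + 1 : ℕ) : ℤ) by push_cast; ring, zpow_neg, zpow_natCast]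
  field_simp
  ring

theorem sum_integrals_collapse_general (k n : ℕ) (b : ℂ) (hb : 0 < b.re) :
    (Nat.factorial (2 * k - 1) : ℂ) * b ^ (2 * k - 1) *
        ∑ j ∈ Finset.range (2 * k),
          (b ^ (-(j : ℤ)) * (2 * (Real.pi : ℂ)) ^ (-(j : ℤ) - 1) /
              ((Nat.factorial (j + 1) : ℂ) * (Nat.factorial (2 * k - 1 - j) : ℂ))) *
            ∫ u in (0:ℝ)..1,
              (-2 * (2 * (Real.pi : ℂ) * n) ^ (j + 1) +
                  (2 * (Real.pi : ℂ) * n - Complex.I * Real.log u) ^ (j + 1) +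
                  (2 * (Real.pi : ℂ) * n + Complex.I * Real.log u) ^ (j + 1)) /
                (1 - (u : ℂ)) ^ 2 =
      ((2 * (Real.pi : ℂ)) ^ (-(2 * k : ℤ)) / (2 * k)) *
        ∫ u in (0:ℝ)..1,
          (-2 * (2 * (Real.pi : ℂ) * (n + b)) ^ (2 * k) +
              (2 * (Real.pi : ℂ) * (n + b) - Complex.I * Real.log u) ^ (2 * k) +
              (2 * (Real.pi : ℂ) * (n + b) + Complex.I * Real.log u) ^ (2 * k)) /
            (1 - (u : ℂ)) ^ 2 := by
  have hb₀ : b ≠ 0 := by rintro rfl; simp at hb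
  have hπ : 2 * (π : ℂ) ≠ 0 := by simp [pi_ne_zero]
  have hsplit := integral_secondDiff_add (2 * k) (2 * π * n) (2 * π * b)
  simp only [secondDiff, ← mul_add] at hsplit
  rw [hsplit, mul_sum, mul_sum]
  refine sum_congr rfl fun j hj => ?_
  have hcoeff := factorial_mul_pow_mul_zpow_div (mem_range.1 hj) hb₀ hπ
  push_cast at hcoeff
  rw [← mul_assoc, hcoeff]
  ring

/-- For positive integers `k`, `n` and complex `b` with `Re b > 0`, the weighted sum of
integrals collapses to a single integral with parameter `n + b`. -/
theorem sum_integrals_collapse (k n : ℕ) (hk : 0 < k) (hn : 0 < n) (b : ℂ) (hb : 0 < b.re) :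
    (Nat.factorial (2 * k - 1) : ℂ) * b ^ (2 * k - 1) *
        ∑ j ∈ Finset.range (2 * k),
          (b ^ (-(j : ℤ)) * (2 * (Real.pi : ℂ)) ^ (-(j : ℤ) - 1) /
              ((Nat.factorial (j + 1) : ℂ) * (Nat.factorial (2 * k - 1 - j) : ℂ))) *
            ∫ u in (0:ℝ)..1,
              (-2 * (2 * (Real.pi : ℂ) * n) ^ (j + 1) +
                  (2 * (Real.pi : ℂ) * n - Complex.I * Real.log u) ^ (j + 1) +
                  (2 * (Real.pi : ℂ) * n + Complex.I * Real.log u) ^ (j + 1)) /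
                (1 - (u : ℂ)) ^ 2 =
      ((2 * (Real.pi : ℂ)) ^ (-(2 * k : ℤ)) / (2 * k)) *
        ∫ u in (0:ℝ)..1,
          (-2 * (2 * (Real.pi : ℂ) * (n + b)) ^ (2 * k) +
              (2 * (Real.pi : ℂ) * (n + b) - Complex.I * Real.log u) ^ (2 * k) +
              (2 * (Real.pi : ℂ) * (n + b) + Complex.I * Real.log u) ^ (2 * k)) /
            (1 - (u : ℂ)) ^ 2 :=
  sum_integrals_collapse_general k n b hb
end
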